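/- For every a ∈ ℝ, t > 0 and ξ ∈ ℝ, the Fourier transform of the Mehler kernel in the space variable is given by ∫_ℝ S_a(x,t) e^{−i x ξ} dx = cosh(at)^{−1/2} exp(−ξ² · tanh(at)/a), where tanh(at)/a is interpreted as t when a = 0. -/

import Mathlib

open MeasureTheory

/-- The Mehler kernel `S_a(x,t) = (4πt)^{−1/2} (at/sinh(at))^{1/2} exp(−(x²/(4t))·(at/tanh(at)))`,
with the conventions `at/sinh(at) = at/tanh(at) = 1` when `a = 0`. -/
noncomputable def mehlerS (a x t : ℝ) : ℝ :=
  (4 * Real.pi * t) ^ (-(1 : ℝ) / 2) *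
    Real.sqrt (if a = 0 then 1 else (a * t) / Real.sinh (a * t)) *
    Real.exp (-(x ^ 2 / (4 * t)) * (if a = 0 then 1 else (a * t) / Real.tanh (a * t)))

/-! For fixed `t`, `S_a(·, t)` is the Gaussian `A e^{-c x²}` with
`A = (4πt)^{-1/2} (at/sinh(at))^{1/2}` and `c = at coth(at) / (4t)`, whose Fourier transform
is `A √(π/c) e^{-ξ²/(4c)}`. Since `(at/sinh(at)) / (at coth(at)) = 1/cosh(at)`, the amplitude
collapses to `cosh(at)^{-1/2}`, and `1/(4c) = tanh(at)/a`. -/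

open Real

theorem Real.rpow_neg_one_half {x : ℝ} (hx : 0 ≤ x) : x ^ (-(1 : ℝ) / 2) = (√x)⁻¹ := by
  rw [neg_div, rpow_neg hx, sqrt_eq_rpow]

theorem fourierIntegral_ofReal_gaussian (A : ℝ) {c : ℝ} (hc : 0 < c) (ξ : ℝ) :
    ∫ x : ℝ, ((A * exp (-c * x ^ 2) : ℝ) : ℂ) * Complex.exp (-Complex.I * x * ξ)
      = ((A * √(π / c) * exp (-ξ ^ 2 / (4 * c)) : ℝ) : ℂ) := by
  have h := fourierIntegral_gaussian (b := c) (by simpa using hc) (-ξ)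
  have hπc : ((π / c : ℝ) : ℂ) ^ (1 / 2 : ℂ) = (√(π / c) : ℝ) := by
    rw [sqrt_eq_rpow, Complex.ofReal_cpow (by positivity)]
    norm_num
  push_cast at h hπc ⊢
  rw [hπc, neg_sq] at h
  simp_rw [mul_assoc (A : ℂ), integral_const_mul]
  rw [← h]
  congr 2 with x
  rw [mul_comm]
  ring_nf

lemma Real.div_sinh_pos {u : ℝ} (hu : u ≠ 0) : 0 < u / sinh u := by
  rcases hu.lt_or_gt with h | h
  · exact div_pos_of_neg_of_neg h (sinh_neg_iff.2 h)
  · exact div_pos h (sinh_pos_iff.2 h)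

lemma Real.div_tanh_eq (u : ℝ) : u / tanh u = u / sinh u * cosh u := by
  rw [tanh_eq_sinh_div_cosh, div_div_eq_mul_div, mul_div_right_comm]

lemma Real.div_tanh_pos {u : ℝ} (hu : u ≠ 0) : 0 < u / tanh u := by
  rw [div_tanh_eq]
  exact mul_pos (div_sinh_pos hu) (cosh_pos u)

namespace Mehler

noncomputable def sinhFactor (a t : ℝ) : ℝ := if a = 0 then 1 else a * t / sinh (a * t)

noncomputable def cothFactor (a t : ℝ) : ℝ := if a = 0 then 1 else a * t / tanh (a * t)

noncomputable def gaussCoeff (a t : ℝ) : ℝ := cothFactor a t / (4 * t)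

variable {a t : ℝ}

lemma sinhFactor_pos (ht : t ≠ 0) : 0 < sinhFactor a t := by
  unfold sinhFactor
  split_ifs with ha
  · exact one_pos
  · exact div_sinh_pos (mul_ne_zero ha ht)

lemma cothFactor_pos (ht : t ≠ 0) : 0 < cothFactor a t := by
  unfold cothFactor
  split_ifs with ha
  · exact one_pos
  · exact div_tanh_pos (mul_ne_zero ha ht)

lemma gaussCoeff_pos (ht : 0 < t) : 0 < gaussCoeff a t :=
  div_pos (cothFactor_pos ht.ne') (by positivity)

lemma sinhFactor_div_cothFactor (ht : t ≠ 0) :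
    sinhFactor a t / cothFactor a t = (cosh (a * t))⁻¹ := by
  unfold sinhFactor cothFactor
  split_ifs with ha
  · simp [ha]
  · have := (div_sinh_pos (mul_ne_zero ha ht)).ne'
    rw [div_tanh_eq]
    field_simp

lemma inv_four_mul_gaussCoeff (ht : t ≠ 0) :
    (4 * gaussCoeff a t)⁻¹ = if a = 0 then t else tanh (a * t) / a := by
  have := (cothFactor_pos (a := a) ht).ne'
  unfold gaussCoeff cothFactor at *
  split_ifs <;> field_simp

theorem _root_.mehlerS_eq_gaussian (a x t : ℝ) :
    mehlerS a x t =
      (4 * π * t) ^ (-(1 : ℝ) / 2) * √(sinhFactor a t) * exp (-gaussCoeff a t * x ^ 2) := by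
  rw [mehlerS, gaussCoeff, sinhFactor, cothFactor]
  ring_nf

lemma amplitude_mul_sqrt_pi_div_gaussCoeff (ht : 0 < t) :
    (4 * π * t) ^ (-(1 : ℝ) / 2) * √(sinhFactor a t) * √(π / gaussCoeff a t)
      = cosh (a * t) ^ (-(1 : ℝ) / 2) := by
  have hr := cothFactor_pos (a := a) ht.ne'
  have hπ : π / gaussCoeff a t = 4 * π * t / cothFactor a t := by
    rw [gaussCoeff]
    field_simp
  rw [hπ, rpow_neg_one_half (by positivity), rpow_neg_one_half (cosh_pos _).le,
    ← sqrt_inv (cosh (a * t)), ← sinhFactor_div_cothFactor ht.ne', sqrt_div (by positivity),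
    sqrt_div (sinhFactor_pos ht.ne').le]
  have : √(4 * π * t) ≠ 0 := by positivity
  field_simp

end Mehler

/-- The spatial Fourier transform of the Mehler kernel:
`∫ S_a(x,t) e^{−ixξ} dx = cosh(at)^{−1/2} exp(−ξ² tanh(at)/a)`, where `tanh(at)/a` is
interpreted as `t` when `a = 0`. -/
theorem stmt_5 (a t : ℝ) (ht : 0 < t) (ξ : ℝ) :
    (∫ x : ℝ, (mehlerS a x t : ℂ) * Complex.exp (-Complex.I * (x : ℂ) * (ξ : ℂ)))
      = (((Real.cosh (a * t)) ^ (-(1 : ℝ) / 2) *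
          Real.exp (-(ξ ^ 2) * (if a = 0 then t else Real.tanh (a * t) / a)) : ℝ) : ℂ) := by
  simp_rw [mehlerS_eq_gaussian]
  rw [fourierIntegral_ofReal_gaussian _ (Mehler.gaussCoeff_pos ht),
    Mehler.amplitude_mul_sqrt_pi_div_gaussCoeff ht, div_eq_mul_inv (-ξ ^ 2),
    Mehler.inv_four_mul_gaussCoeff ht.ne']
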